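/- Let Q be a unital quantale, (X, α) a Q-fuzzy set. The unit map η : X → Q^{Q^X}, η(x)(γ) = γ(x), satisfies the Goguen condition α(x) ≤ (α↑†)↑(η(x)) for all x ∈ X, where (α↑†)↑(Λ) = ⋀_{γ ∈ Q^X} Λ(γ) ⧸ (⋀_{x} α(x) ⧹ γ(x)). -/

import Mathlib

/-- Left implication in a unital quantale: `ldd r q = r ⧸ q`. -/
def ldd {Q : Type*} [Monoid Q] [CompleteLattice Q] (r q : Q) : Q := sSup {p | p * q ≤ r}

/-- Right implication in a unital quantale: `rdd p r = p ⧹ r`. -/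
def rdd {Q : Type*} [Monoid Q] [CompleteLattice Q] (p r : Q) : Q := sSup {q | p * q ≤ r}

/-- Image of a `Q`-valued map along `f`. -/
noncomputable def fim {X Y : Type*} {Q : Type*} [CompleteLattice Q] (f : X → Y) (α : X → Q) :
    Y → Q := fun y => ⨆ x ∈ f ⁻¹' {y}, α x

/-! The Goguen condition at `x` is residuation applied to the counit inequality
`α x ⊗ (α x ⧹ γ x) ≤ γ x`, after bounding `⋀ x', α x' ⧹ γ x'` by its value at `x' = x`. -/

open Quantale

section Residuation

variable {Q : Type*} [Monoid Q] [CompleteLattice Q] [IsQuantale Q] {p q r : Q}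

theorem le_ldd_iff : p ≤ ldd r q ↔ p * q ≤ r :=
  leftMulResiduation_le_iff_mul_le

theorem le_rdd_iff : q ≤ rdd p r ↔ p * q ≤ r :=
  rightMulResiduation_le_iff_mul_le

theorem mul_rdd_le : p * rdd p r ≤ r :=
  le_rdd_iff.mp le_rfl

end Residuation

theorem eta_goguen {X : Type*} {Q : Type*} [Monoid Q] [CompleteLattice Q]
    [IsQuantale Q] (α : X → Q) (x : X) :
    α x ≤ ⨅ γ : X → Q, ldd (γ x) (⨅ x', rdd (α x') (γ x')) := by
  refine le_iInf fun γ => le_ldd_iff.mpr ?_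
  calc α x * ⨅ x', rdd (α x') (γ x') ≤ α x * rdd (α x) (γ x) := by
        gcongr
        exact iInf_le _ x
    _ ≤ γ x := mul_rdd_le
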